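/- arXiv:1504.07100 — 2 statements merged into one kernel-verified Lean document; each statement's English description precedes it below -/
import Mathlib

section
/- Let A : ℝ → M₂(ℂ) be continuous and let y : ℝ → M₂(ℂ) satisfy y(0) = 1 and y′(t) = y(t)·A(t) for all t ∈ [0,1]. Then the ordered products P_n = (1 + n⁻¹A(0))·(1 + n⁻¹A(1/n))·…·(1 + n⁻¹A((n−1)/n)), with factors at earlier times on the left, converge to y(1) as n → ∞. -/
/-!
The ordered product is Euler's method for `y' = y A` with step `1/n`. By the mean value inequality
one step of the scheme deviates from the exact solution by at most `ε/n`, where `ε` is the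
oscillation of `y A` over intervals of length `1/n`, and it amplifies an earlier error by at most
`1 + M/n` with `M = sup ‖A‖`. The discrete Gronwall inequality then bounds the error at time `1`
by `ε e^M`, and `ε → 0` by uniform continuity of `y A` on `[0,1]`.

The entrywise sup norm on `M₂(ℂ)` is not submultiplicative, so the estimates are made in any
normed `ℝ`-algebra and applied to matrices with the `ℓ^∞`-operator norm, which induces the same
topology.
-/

open Set Filter Topology

lemma norm_sub_sub_smul_le_of_hasDerivAt {F : Type*} [NormedAddCommGroup F] [NormedSpace ℝ F]
    {y f : ℝ → F} {a b ε : ℝ} (hab : a ≤ b) (hy : ∀ s ∈ Icc a b, HasDerivAt y (f s) s)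
    (hf : ∀ s ∈ Icc a b, ‖f s - f a‖ ≤ ε) :
    ‖y b - y a - (b - a) • f a‖ ≤ ε * (b - a) := by
  have hg : ∀ s ∈ Icc a b,
      HasDerivWithinAt (fun s => y s - s • f a) (f s - f a) (Icc a b) s := fun s hs => by
    simpa only [one_smul] using
      ((hy s hs).fun_sub ((hasDerivAt_id' s).smul_const (f a))).hasDerivWithinAt
  have := norm_image_sub_le_of_norm_deriv_le_segment' hg (fun s hs => hf s (Ico_subset_Icc_self hs))
    b (right_mem_Icc.2 hab)
  convert this using 2
  rw [sub_smul]
  abel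

section EulerScheme

variable {E : Type*} [NormedRing E] [NormedAlgebra ℝ E]

def eulerProduct (A : ℝ → E) (h : ℝ) (k : ℕ) : E :=
  ((List.range k).map fun i => 1 + h • A (i * h)).prod

lemma eulerProduct_zero (A : ℝ → E) (h : ℝ) : eulerProduct A h 0 = 1 := rfl

lemma eulerProduct_succ (A : ℝ → E) (h : ℝ) (k : ℕ) :
    eulerProduct A h (k + 1) = eulerProduct A h k * (1 + h • A (k * h)) := by
  simp [eulerProduct, List.range_succ]

lemma norm_sub_mul_one_add_smul_le {y A : ℝ → E} {t h ε M : ℝ} (hh : 0 ≤ h)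
    (hy : ∀ s ∈ Icc t (t + h), HasDerivAt y (y s * A s) s)
    (hf : ∀ s ∈ Icc t (t + h), ‖y s * A s - y t * A t‖ ≤ ε) (hM : ‖A t‖ ≤ M)
    (P : E) :
    ‖y (t + h) - P * (1 + h • A t)‖ ≤ h * ε + (1 + h * M) * ‖y t - P‖ := by
  have hlocal : ‖y (t + h) - y t - h • (y t * A t)‖ ≤ h * ε := by
    simpa [mul_comm ε] using
      norm_sub_sub_smul_le_of_hasDerivAt (le_add_of_nonneg_right hh) hy hf
  have hsplit : y (t + h) - P * (1 + h • A t) =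
      (y (t + h) - y t - h • (y t * A t)) + ((y t - P) + h • ((y t - P) * A t)) := by
    rw [mul_add, mul_one, mul_smul_comm, sub_mul, smul_sub]
    abel
  have hprop : ‖h • ((y t - P) * A t)‖ ≤ h * M * ‖y t - P‖ := by
    rw [norm_smul, Real.norm_of_nonneg hh, mul_assoc, mul_comm M]
    gcongr
    exact (norm_mul_le _ _).trans (by gcongr)
  rw [hsplit]
  calc _ ≤ h * ε + (‖y t - P‖ + h * M * ‖y t - P‖) :=
        (norm_add_le _ _).trans (add_le_add hlocal ((norm_add_le _ _).trans (by gcongr)))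
    _ = h * ε + (1 + h * M) * ‖y t - P‖ := by ring

theorem norm_sub_eulerProduct_le {y A : ℝ → E} {h ε M : ℝ} {n : ℕ} (hh : 0 ≤ h)
    (hy0 : y 0 = 1) (hy : ∀ t ∈ Icc 0 (n * h), HasDerivAt y (y t * A t) t)
    (hM : ∀ t ∈ Icc 0 (n * h), ‖A t‖ ≤ M)
    (hf : ∀ s ∈ Icc 0 (n * h), ∀ t ∈ Icc 0 (n * h), t ≤ s → s ≤ t + h →
      ‖y s * A s - y t * A t‖ ≤ ε) :
    ‖y (n * h) - eulerProduct A h n‖ ≤ n * h * ε * Real.exp (n * h * M) := by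
  have h0 : (0 : ℝ) ∈ Icc 0 (n * h) := left_mem_Icc.2 (by positivity)
  have hM0 : 0 ≤ M := (norm_nonneg _).trans (hM 0 h0)
  have hε : 0 ≤ ε := by simpa using hf 0 h0 0 h0 le_rfl (by linarith)
  have hstep : ∀ k < n, ‖y ((k + 1 : ℕ) * h) - eulerProduct A h (k + 1)‖ ≤
      (1 + h * M) * ‖y (k * h) - eulerProduct A h k‖ + h * ε := fun k hk => by
    have hsub : Icc (k * h) (k * h + h) ⊆ Icc 0 (n * h) := by
      have : (k + 1 : ℝ) ≤ n := by exact_mod_cast hk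
      exact Icc_subset_Icc (by positivity) (by nlinarith)
    have hk_mem : (k * h : ℝ) ∈ Icc 0 (n * h) := hsub (left_mem_Icc.2 (by linarith))
    rw [add_comm _ (h * ε)]
    simpa only [Nat.cast_succ, add_mul, one_mul, eulerProduct_succ] using
      norm_sub_mul_one_add_smul_le hh (fun s hs => hy s (hsub hs))
        (fun s hs => hf s (hsub hs) _ hk_mem hs.1 hs.2) (hM _ hk_mem) (eulerProduct A h k)
  -- Freezing the error after step `n` makes the recursion hold for every `k`.
  let u : ℕ → ℝ := fun k => ‖y (min k n * h) - eulerProduct A h (min k n)‖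
  have hu : ∀ k ≥ 0, u (k + 1) ≤ (1 + h * M) * u k + h * ε := fun k _ => by
    rcases lt_or_ge k n with hk | hk
    · simpa only [u, min_eq_left hk.le, min_eq_left (Nat.succ_le_of_lt hk)] using hstep k hk
    · simp only [u, min_eq_right hk, min_eq_right (hk.trans k.le_succ)]
      have he := norm_nonneg (y (n * h) - eulerProduct A h n)
      nlinarith [mul_nonneg (mul_nonneg hh hM0) he, mul_nonneg hh hε]
  simpa [u, hy0, eulerProduct_zero, mul_assoc] using
    discrete_gronwall (u := u) (norm_nonneg _) hu (fun _ _ => by positivity)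
      (fun _ _ => by positivity) (Nat.zero_le n)

theorem norm_sub_eulerProduct_inv_le {y A : ℝ → E} {ε M : ℝ} {n : ℕ} (hn : n ≠ 0)
    (hy0 : y 0 = 1) (hy : ∀ t ∈ Icc 0 1, HasDerivAt y (y t * A t) t)
    (hM : ∀ t ∈ Icc 0 1, ‖A t‖ ≤ M)
    (hf : ∀ s ∈ Icc 0 1, ∀ t ∈ Icc 0 1, t ≤ s → s ≤ t + (n : ℝ)⁻¹ →
      ‖y s * A s - y t * A t‖ ≤ ε) :
    ‖y 1 - eulerProduct A (n : ℝ)⁻¹ n‖ ≤ ε * Real.exp M := by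
  have hn1 : (n : ℝ) * (n : ℝ)⁻¹ = 1 := mul_inv_cancel₀ (Nat.cast_ne_zero.2 hn)
  simpa [hn1] using norm_sub_eulerProduct_le (h := (n : ℝ)⁻¹) (n := n) (by positivity) hy0
    (by rwa [hn1]) (by rwa [hn1]) (by rwa [hn1])

end EulerScheme

/-- the parallel transport `y(1)` of a continuous `M₂(ℂ)`-valued
one-form `A` along `[0,1]` is the limit of the ordered products
`(1 + n⁻¹A(0))·(1 + n⁻¹A(1/n))·…·(1 + n⁻¹A((n−1)/n))`. -/
theorem holonomy_eq_limit_of_ordered_products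
    (A : ℝ → Matrix (Fin 2) (Fin 2) ℂ) (hA : Continuous A)
    (y : ℝ → Matrix (Fin 2) (Fin 2) ℂ) (hy0 : y 0 = 1)
    (hy : ∀ t ∈ Set.Icc (0 : ℝ) 1, HasDerivAt y (y t * A t) t) :
    Filter.Tendsto
      (fun n : ℕ =>
        (((List.range n).map
          (fun i => (1 : Matrix (Fin 2) (Fin 2) ℂ) + (n : ℝ)⁻¹ • A (i / n))).prod))
      Filter.atTop (nhds (y 1)) := by
  let _ : NormedRing (Matrix (Fin 2) (Fin 2) ℂ) := Matrix.linftyOpNormedRing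
  let _ : NormedAlgebra ℝ (Matrix (Fin 2) (Fin 2) ℂ) := Matrix.linftyOpNormedAlgebra
  have hyc : ContinuousOn y (Icc 0 1) := fun t ht => (hy t ht).continuousAt.continuousWithinAt
  have hyA : UniformContinuousOn (fun t => y t * A t) (Icc 0 1) :=
    isCompact_Icc.uniformContinuousOn_of_continuous (hyc.mul hA.continuousOn)
  obtain ⟨M, hM⟩ := isCompact_Icc.exists_bound_of_continuousOn hA.continuousOn
  show Tendsto (fun n : ℕ => eulerProduct A (n : ℝ)⁻¹ n) atTop (𝓝 (y 1))
  refine Metric.tendsto_atTop.2 fun ε hε => ?_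
  obtain ⟨δ, hδ, hδε⟩ :=
    Metric.uniformContinuousOn_iff_le.1 hyA (ε / 2 / Real.exp M) (by positivity)
  obtain ⟨N, hN⟩ := exists_nat_gt δ⁻¹
  refine ⟨N, fun n hn => ?_⟩
  have hNn : δ⁻¹ < n := hN.trans_le (by exact_mod_cast hn)
  have hn0 : n ≠ 0 := by rintro rfl; exact (inv_pos.2 hδ).not_gt (by simpa using hNn)
  have hnδ : (n : ℝ)⁻¹ ≤ δ :=
    (inv_le_comm₀ (Nat.cast_pos.2 (Nat.pos_of_ne_zero hn0)) hδ).2 hNn.le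
  rw [dist_comm, dist_eq_norm]
  calc _ ≤ ε / 2 / Real.exp M * Real.exp M :=
        norm_sub_eulerProduct_inv_le hn0 hy0 hy hM fun s hs t ht hts hst => by
          rw [← dist_eq_norm]
          exact hδε s hs t ht (by rw [Real.dist_eq, abs_of_nonneg (by linarith)]; linarith)
    _ < ε := by rw [div_mul_cancel₀ _ (Real.exp_pos M).ne']; linarith
end

section
/- Let A, W : ℝ → M₂(ℂ) be continuous. For each s ∈ ℝ let y_s : ℝ → M₂(ℂ) be the solution of y_s′(t) = y_s(t)·(A(t) + s·W(t)) on [0,1] with y_s(0) = 1. Then y₀(x) is invertible for every x ∈ [0,1], the map s ↦ y_s(1) is differentiable at s = 0, and its derivative equals (∫₀¹ y₀(x)·W(x)·y₀(x)⁻¹ dx)·y₀(1). -/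
attribute [local instance] Matrix.normedAddCommGroup Matrix.normedSpace

/-!
Put `v = y₀⁻¹`. It exists because `det y₀` solves the scalar equation `d' = d · tr A`, so that
`det y₀ (x) = exp ∫₀ˣ tr A ≠ 0`, and it solves `v' = -A v`. Hence `(y_s v)' = s · y_s W v`, i.e.
`y_s(1) = (1 + s ∫₀¹ y_s W v) · y₀(1)`, and it remains to see that `s ↦ ∫₀¹ y_s W v` is continuous
at `0`. This holds because `y_s → y₀` uniformly on `[0, 1]`: the difference solves
`(y_s - y₀)' = (y_s - y₀)(A + s W) + s y₀ W`, so Grönwall's inequality bounds it by a quantity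
that vanishes with `s`.
-/

open Set Filter Topology

section MatrixCalculus

variable {𝕜 : Type*} [RCLike 𝕜] {l m n : Type*} [Fintype m]

theorem HasDerivAt.matrix_apply [Fintype l] {f : ℝ → Matrix l m 𝕜} {f' : Matrix l m 𝕜} {t : ℝ}
    (hf : HasDerivAt f f' t) (i : l) (j : m) :
    HasDerivAt (fun t => f t i j) (f' i j) t :=
  hasDerivAt_pi.1 (hasDerivAt_pi.1 hf i) j

theorem HasDerivAt.matrix_mul [Fintype l] [Fintype n] {f : ℝ → Matrix l m 𝕜}
    {g : ℝ → Matrix m n 𝕜} {f' : Matrix l m 𝕜} {g' : Matrix m n 𝕜} {t : ℝ}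
    (hf : HasDerivAt f f' t) (hg : HasDerivAt g g' t) :
    HasDerivAt (fun t => f t * g t) (f' * g t + f t * g') t := by
  refine hasDerivAt_pi.2 fun i => hasDerivAt_pi.2 fun j => ?_
  simp only [Matrix.add_apply, Matrix.mul_apply, ← Finset.sum_add_distrib]
  exact HasDerivAt.fun_sum fun k _ => (hf.matrix_apply i k).mul (hg.matrix_apply k j)

theorem Matrix.norm_mul_le_card_mul [Fintype l] [Fintype n] (A : Matrix l m 𝕜)
    (B : Matrix m n 𝕜) :
    ‖A * B‖ ≤ Fintype.card m * (‖A‖ * ‖B‖) := by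
  refine (Matrix.norm_le_iff (by positivity)).2 fun i j => ?_
  calc ‖(A * B) i j‖ ≤ ∑ k, ‖A i k * B k j‖ := by rw [Matrix.mul_apply]; exact norm_sum_le _ _
  _ ≤ ∑ _k : m, ‖A‖ * ‖B‖ := Finset.sum_le_sum fun k _ => by
      rw [norm_mul]
      gcongr <;> exact Matrix.norm_entry_le_entrywise_sup_norm _
  _ = _ := by simp

theorem TendstoUniformlyOn.matrix_mul_right [Fintype l] [Fintype n] {ι α : Type*}
    {F : ι → α → Matrix l m 𝕜} {f : α → Matrix l m 𝕜} {p : Filter ι} {s : Set α}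
    {M : α → Matrix m n 𝕜} {C : ℝ}
    (h : TendstoUniformlyOn F f p s) (hM : ∀ x ∈ s, ‖M x‖ ≤ C) :
    TendstoUniformlyOn (fun i x => F i x * M x) (fun x => f x * M x) p s := by
  refine Metric.tendstoUniformlyOn_iff.2 fun ε hε => ?_
  have hc : 0 < Fintype.card m * |C| + 1 := by positivity
  filter_upwards [Metric.tendstoUniformlyOn_iff.1 h (ε / (Fintype.card m * |C| + 1))
    (by positivity)] with i hi x hx
  have hix := hi x hx
  rw [dist_eq_norm] at hix ⊢
  rw [← Matrix.sub_mul]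
  calc ‖(f x - F i x) * M x‖ ≤ Fintype.card m * (‖f x - F i x‖ * |C|) :=
        (Matrix.norm_mul_le_card_mul _ _).trans (by gcongr; exact (hM x hx).trans (le_abs_self C))
  _ ≤ (Fintype.card m * |C| + 1) * ‖f x - F i x‖ := by nlinarith [norm_nonneg (f x - F i x)]
  _ < (Fintype.card m * |C| + 1) * (ε / (Fintype.card m * |C| + 1)) := by gcongr
  _ = ε := mul_div_cancel₀ _ hc.ne'

variable [Fintype n]

theorem integral_mul_sub_mul_eq_of_hasDerivAt {y v A B : ℝ → Matrix n n 𝕜} {a b : ℝ}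
    (hab : a ≤ b) (hy : ∀ t ∈ Icc a b, HasDerivAt y (y t * B t) t)
    (hv : ∀ t ∈ Icc a b, HasDerivAt v (-(A t * v t)) t)
    (hA : ContinuousOn A (Icc a b)) (hB : ContinuousOn B (Icc a b)) :
    ∫ t in a..b, y t * (B t - A t) * v t = y b * v b - y a * v a := by
  rw [← uIcc_of_le hab] at hy hv hA hB
  have hyc : ContinuousOn y (uIcc a b) := fun t ht => (hy t ht).continuousAt.continuousWithinAt
  have hvc : ContinuousOn v (uIcc a b) := fun t ht => (hv t ht).continuousAt.continuousWithinAt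
  refine intervalIntegral.integral_eq_sub_of_hasDerivAt (f := fun t => y t * v t) (fun t ht => ?_)
    ((hyc.mul (hB.sub hA)).mul hvc).intervalIntegrable
  refine ((hy t ht).matrix_mul (hv t ht)).congr_deriv ?_
  rw [Matrix.mul_sub, Matrix.sub_mul, Matrix.mul_neg, Matrix.mul_assoc, Matrix.mul_assoc,
    sub_eq_add_neg]

theorem norm_sub_le_gronwallBound_of_hasDerivAt_mul {y z A B : ℝ → Matrix n n 𝕜} {a b K ε : ℝ}
    (hy : ∀ t ∈ Icc a b, HasDerivAt y (y t * B t) t)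
    (hz : ∀ t ∈ Icc a b, HasDerivAt z (z t * A t) t) (hyz : y a = z a)
    (hB : ∀ t ∈ Icc a b, ‖B t‖ ≤ K) (hε : ∀ t ∈ Icc a b, ‖z t * (B t - A t)‖ ≤ ε) :
    ∀ t ∈ Icc a b, ‖y t - z t‖ ≤ gronwallBound 0 (Fintype.card n * K) ε (t - a) := by
  refine norm_le_gronwallBound_of_norm_deriv_right_le (f' := fun t => y t * B t - z t * A t)
    (fun t ht => ((hy t ht).sub (hz t ht)).continuousAt.continuousWithinAt)
    (fun t ht =>
      ((hy t (Ico_subset_Icc_self ht)).sub (hz t (Ico_subset_Icc_self ht))).hasDerivWithinAt)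
    (by simp [hyz]) fun t ht => ?_
  replace ht := Ico_subset_Icc_self ht
  have hsplit : y t * B t - z t * A t = (y t - z t) * B t + z t * (B t - A t) := by
    simp only [Matrix.sub_mul, Matrix.mul_sub]
    abel
  calc ‖y t * B t - z t * A t‖ ≤ ‖(y t - z t) * B t‖ + ‖z t * (B t - A t)‖ := by
        rw [hsplit]; exact norm_add_le _ _
  _ ≤ Fintype.card n * (‖y t - z t‖ * K) + ε := by
        gcongr
        · exact (Matrix.norm_mul_le_card_mul _ _).trans (by gcongr; exact hB t ht)
        · exact hε t ht
  _ = Fintype.card n * K * ‖y t - z t‖ + ε := by ring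

theorem tendstoUniformlyOn_of_hasDerivAt_mul_add_smul {A W : ℝ → Matrix n n 𝕜} {a b : ℝ}
    (hA : ContinuousOn A (Icc a b)) (hW : ContinuousOn W (Icc a b))
    {y : ℝ → ℝ → Matrix n n 𝕜}
    (hy : ∀ s : ℝ, ∀ t ∈ Icc a b, HasDerivAt (y s) (y s t * (A t + s • W t)) t)
    (hya : ∀ s, y s a = y 0 a) :
    TendstoUniformlyOn y (y 0) (𝓝 0) (Icc a b) := by
  have hy₀ : ∀ t ∈ Icc a b, HasDerivAt (y 0) (y 0 t * A t) t := by simpa using hy 0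
  have hy₀c : ContinuousOn (y 0) (Icc a b) := fun t ht =>
    (hy₀ t ht).continuousAt.continuousWithinAt
  obtain ⟨LA, hLA⟩ := isCompact_Icc.exists_bound_of_continuousOn hA
  obtain ⟨LW, hLW⟩ := isCompact_Icc.exists_bound_of_continuousOn hW
  obtain ⟨L, hL⟩ := isCompact_Icc.exists_bound_of_continuousOn (hy₀c.mul hW)
  set K := Fintype.card n * (|LA| + |LW|)
  set δ : ℝ → ℝ := fun s => gronwallBound 0 K (|s| * |L|) (b - a)
  have hδ : Tendsto δ (𝓝 0) (𝓝 0) :=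
    ((gronwallBound_continuous_ε 0 K (b - a)).comp
      (by fun_prop : Continuous fun s : ℝ => |s| * |L|)).tendsto' 0 0
      (by simp [gronwallBound_ε0_δ0])
  have hclose : ∀ s, |s| ≤ 1 → ∀ t ∈ Icc a b, ‖y s t - y 0 t‖ ≤ δ s := by
    intro s hs t ht
    refine (norm_sub_le_gronwallBound_of_hasDerivAt_mul (hy s) hy₀ (hya s) (K := |LA| + |LW|)
      (ε := |s| * |L|) (fun t ht => ?_) (fun t ht => ?_) t ht).trans ?_
    · calc ‖A t + s • W t‖ ≤ ‖A t‖ + |s| * ‖W t‖ := by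
            rw [← Real.norm_eq_abs, ← norm_smul]; exact norm_add_le _ _
      _ ≤ |LA| + 1 * |LW| := by
            gcongr
            · exact (hLA t ht).trans (le_abs_self _)
            · exact (hLW t ht).trans (le_abs_self _)
      _ = |LA| + |LW| := by ring
    · rw [add_sub_cancel_left, Matrix.mul_smul, norm_smul, Real.norm_eq_abs]
      gcongr
      exact (hL t ht).trans (le_abs_self _)
    · exact gronwallBound_mono le_rfl (by positivity) (by positivity) (by linarith [ht.2])
  refine Metric.tendstoUniformlyOn_iff.2 fun ε hε => ?_
  filter_upwards [hδ.eventually (gt_mem_nhds hε), Metric.closedBall_mem_nhds (0 : ℝ) one_pos]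
    with s hsε hs t ht
  rw [dist_comm, dist_eq_norm]
  exact (hclose s (by simpa using hs) t ht).trans_lt hsε

theorem continuousAt_integral_mul_of_hasDerivAt_mul_add_smul {A W M : ℝ → Matrix n n 𝕜}
    {a b : ℝ} (hab : a ≤ b) (hA : ContinuousOn A (Icc a b)) (hW : ContinuousOn W (Icc a b))
    {y : ℝ → ℝ → Matrix n n 𝕜}
    (hy : ∀ s : ℝ, ∀ t ∈ Icc a b, HasDerivAt (y s) (y s t * (A t + s • W t)) t)
    (hya : ∀ s, y s a = y 0 a) (hM : ContinuousOn M (Icc a b)) :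
    ContinuousAt (fun s => ∫ x in a..b, y s x * M x) 0 := by
  obtain ⟨C, hC⟩ := isCompact_Icc.exists_bound_of_continuousOn hM
  have hunif := (tendstoUniformlyOn_of_hasDerivAt_mul_add_smul hA hW hy hya).matrix_mul_right hC
  have hyc : ∀ s, ContinuousOn (y s) (Icc a b) := fun s t ht =>
    (hy s t ht).continuousAt.continuousWithinAt
  rw [← uIcc_of_le hab] at hunif hyc hM
  exact hunif.tendsto_intervalIntegral_of_continuousOn
    (Eventually.of_forall fun s => (hyc s).fun_mul hM)

end MatrixCalculus

theorem hasDerivAt_of_eq_add_sub_smul {𝕜 E : Type*} [NontriviallyNormedField 𝕜]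
    [NormedAddCommGroup E] [NormedSpace 𝕜 E] {f g : 𝕜 → E} {a : 𝕜} (hf : ∀ s, f s = f a + (s - a) • g s) (hg : ContinuousAt g a) :
    HasDerivAt f (g a) a := by
  rw [hasDerivAt_iff_tendsto_slope]
  refine (hg.mono_left nhdsWithin_le_nhds).congr' ?_
  filter_upwards [self_mem_nhdsWithin] with s hs
  rw [slope_def_module, hf s, add_sub_cancel_left, smul_smul,
    inv_mul_cancel₀ (sub_ne_zero.2 hs), one_smul]

namespace Matrix

variable {𝕜 : Type*} [RCLike 𝕜] {u : ℝ → Matrix (Fin 2) (Fin 2) 𝕜}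
  {u' : Matrix (Fin 2) (Fin 2) 𝕜} {t : ℝ}

theorem hasDerivAt_det_fin_two (hu : HasDerivAt u u' t) :
    HasDerivAt (fun t => (u t).det) ((u t).adjugate * u').trace t := by
  simp only [det_fin_two]
  refine (((hu.matrix_apply 0 0).mul (hu.matrix_apply 1 1)).sub
    ((hu.matrix_apply 0 1).mul (hu.matrix_apply 1 0))).congr_deriv ?_
  simp only [trace_fin_two, mul_apply, Fin.sum_univ_two, adjugate_fin_two, of_apply, cons_val',
    cons_val_zero, cons_val_one, cons_val_fin_one]
  ring

theorem hasDerivAt_adjugate_fin_two (hu : HasDerivAt u u' t) :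
    HasDerivAt (fun t => (u t).adjugate) u'.adjugate t := by
  refine hasDerivAt_pi.2 fun i => hasDerivAt_pi.2 fun j => ?_
  fin_cases i <;> fin_cases j
  · simpa [adjugate_fin_two] using hu.matrix_apply 1 1
  · simpa [adjugate_fin_two] using (hu.matrix_apply 0 1).fun_neg
  · simpa [adjugate_fin_two] using (hu.matrix_apply 1 0).fun_neg
  · simpa [adjugate_fin_two] using hu.matrix_apply 0 0

theorem adjugate_fin_two_eq_trace_smul_one_sub (B : Matrix (Fin 2) (Fin 2) 𝕜) :
    B.adjugate = B.trace • 1 - B := by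
  ext i j
  fin_cases i <;> fin_cases j <;> simp [adjugate_fin_two, trace_fin_two]

theorem adjugate_mul_mul_adjugate_fin_two (M N : Matrix (Fin 2) (Fin 2) 𝕜) :
    M.adjugate * N * M.adjugate = (M.adjugate * N).trace • M.adjugate - M.det • N.adjugate := by
  have hX : M.adjugate * N = (M.adjugate * N).trace • 1 - (M.adjugate * N).adjugate := by
    rw [adjugate_fin_two_eq_trace_smul_one_sub (M.adjugate * N), sub_sub_cancel]
  have hadj : (M.adjugate * N).adjugate * M.adjugate = M.det • N.adjugate := by
    rw [adjugate_mul_distrib, adjugate_adjugate M (by simp), Fintype.card_fin, Nat.sub_self,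
      pow_zero, one_smul, Matrix.mul_assoc, mul_adjugate, Matrix.mul_smul, Matrix.mul_one]
  conv_lhs => rw [hX]
  rw [Matrix.sub_mul, Matrix.smul_mul, Matrix.one_mul, hadj]

theorem hasDerivAt_inv_fin_two (hu : HasDerivAt u u' t) (hdet : (u t).det ≠ 0) :
    HasDerivAt (fun t => (u t)⁻¹) (-((u t)⁻¹ * u' * (u t)⁻¹)) t := by
  simp only [inv_def, Ring.inverse_eq_inv']
  refine (((hasDerivAt_det_fin_two hu).inv hdet).smul
    (hasDerivAt_adjugate_fin_two hu)).congr_deriv ?_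
  rw [Pi.inv_apply, smul_mul_assoc, mul_smul_comm, smul_mul_assoc,
    adjugate_mul_mul_adjugate_fin_two, smul_sub, smul_smul, smul_smul, inv_mul_cancel₀ hdet,
    one_smul]
  module

theorem hasDerivAt_inv_of_hasDerivAt_mul {A : Matrix (Fin 2) (Fin 2) 𝕜}
    (hu : HasDerivAt u (u t * A) t) (hdet : (u t).det ≠ 0) :
    HasDerivAt (fun t => (u t)⁻¹) (-(A * (u t)⁻¹)) t := by
  refine (hasDerivAt_inv_fin_two hu hdet).congr_deriv ?_
  rw [← Matrix.mul_assoc, nonsing_inv_mul _ hdet.isUnit, Matrix.one_mul]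

end Matrix

theorem eq_mul_cexp_integral_of_hasDerivAt {g τ : ℝ → ℂ} {a b : ℝ} (hτ : Continuous τ)
    (hg : ∀ t ∈ Icc a b, HasDerivAt g (g t * τ t) t) :
    ∀ x ∈ Icc a b, g x = g a * Complex.exp (∫ t in a..x, τ t) := by
  set I : ℝ → ℂ := fun x => ∫ t in a..x, τ t
  have hI : ∀ x, HasDerivAt I (τ x) x := fun x =>
    intervalIntegral.integral_hasDerivAt_right (hτ.intervalIntegrable _ _)
      hτ.aestronglyMeasurable.stronglyMeasurableAtFilter hτ.continuousAt
  have hconst : ∀ x ∈ Icc a b, HasDerivAt (fun x => g x * Complex.exp (-I x)) 0 x := fun x hx =>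
    ((hg x hx).mul (hI x).neg.cexp).congr_deriv (by ring)
  intro x hx
  have hsub : uIcc a x ⊆ Icc a b := by
    rw [uIcc_of_le hx.1]; exact Icc_subset_Icc_right hx.2
  have h := intervalIntegral.integral_eq_sub_of_hasDerivAt (fun t ht => hconst t (hsub ht))
    (intervalIntegrable_const (c := (0 : ℂ)))
  simp only [intervalIntegral.integral_zero, I, intervalIntegral.integral_same, neg_zero,
    Complex.exp_zero, mul_one] at h
  rw [eq_comm, sub_eq_zero] at h
  calc g x = g x * Complex.exp (-I x) * Complex.exp (I x) := by
        rw [mul_assoc, ← Complex.exp_add, neg_add_cancel, Complex.exp_zero, mul_one]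
  _ = g a * Complex.exp (I x) := by rw [h]

theorem det_ne_zero_of_hasDerivAt_mul {u A : ℝ → Matrix (Fin 2) (Fin 2) ℂ} {a b : ℝ}
    (hA : Continuous A) (hu : ∀ t ∈ Icc a b, HasDerivAt u (u t * A t) t) (ha : (u a).det ≠ 0) :
    ∀ x ∈ Icc a b, (u x).det ≠ 0 := by
  have hdet : ∀ t ∈ Icc a b, HasDerivAt (fun t => (u t).det) ((u t).det * (A t).trace) t := by
    intro t ht
    refine (Matrix.hasDerivAt_det_fin_two (hu t ht)).congr_deriv ?_
    rw [← Matrix.mul_assoc, Matrix.adjugate_mul, Matrix.smul_mul, Matrix.one_mul,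
      Matrix.trace_smul, smul_eq_mul]
  intro x hx
  rw [eq_mul_cexp_integral_of_hasDerivAt hA.matrix_trace hdet x hx]
  exact mul_ne_zero ha (Complex.exp_ne_zero _)

/-- the derivative at `s = 0` of the holonomy of the deformed connection
`A + s·W` equals `(∫₀¹ y₀(x)·W(x)·y₀(x)⁻¹ dx)·y₀(1)`. -/
theorem deriv_of_holonomy_under_deformation
    (A W : ℝ → Matrix (Fin 2) (Fin 2) ℂ) (hA : Continuous A) (hW : Continuous W)
    (y : ℝ → ℝ → Matrix (Fin 2) (Fin 2) ℂ)
    (hy0 : ∀ s : ℝ, y s 0 = 1)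
    (hy : ∀ s : ℝ, ∀ t ∈ Set.Icc (0 : ℝ) 1,
      HasDerivAt (y s) (y s t * (A t + s • W t)) t) :
    (∀ x ∈ Set.Icc (0 : ℝ) 1, IsUnit (y 0 x)) ∧
      HasDerivAt (fun s : ℝ => y s 1)
        ((∫ x in (0 : ℝ)..1, y 0 x * W x * (y 0 x)⁻¹) * y 0 1) 0 := by
  have hy₀ : ∀ t ∈ Icc (0 : ℝ) 1, HasDerivAt (y 0) (y 0 t * A t) t := by simpa using hy 0
  have hdet : ∀ x ∈ Icc (0 : ℝ) 1, (y 0 x).det ≠ 0 :=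
    det_ne_zero_of_hasDerivAt_mul hA hy₀ (by simp [hy0])
  refine ⟨fun x hx => (Matrix.isUnit_iff_isUnit_det _).2 (hdet x hx).isUnit, ?_⟩
  have hv : ∀ t ∈ Icc (0 : ℝ) 1, HasDerivAt (fun x => (y 0 x)⁻¹) (-(A t * (y 0 t)⁻¹)) t :=
    fun t ht => Matrix.hasDerivAt_inv_of_hasDerivAt_mul (hy₀ t ht) (hdet t ht)
  set G : ℝ → Matrix (Fin 2) (Fin 2) ℂ := fun s => ∫ x in (0 : ℝ)..1, y s x * W x * (y 0 x)⁻¹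
  have hG : ContinuousAt G 0 := by
    have := continuousAt_integral_mul_of_hasDerivAt_mul_add_smul zero_le_one hA.continuousOn
      hW.continuousOn hy (fun s => (hy0 s).trans (hy0 0).symm)
      (hW.continuousOn.fun_mul fun t ht => (hv t ht).continuousAt.continuousWithinAt)
    simpa only [← Matrix.mul_assoc] using this
  have hkey : ∀ s, y s 1 = y 0 1 + (s - 0) • (G s * y 0 1) := by
    intro s
    have h := integral_mul_sub_mul_eq_of_hasDerivAt (v := fun x => (y 0 x)⁻¹)
      (B := fun t => A t + s • W t) zero_le_one (hy s) hv hA.continuousOn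
      (hA.add (hW.const_smul s)).continuousOn
    simp only [add_sub_cancel_left, Matrix.mul_smul, Matrix.smul_mul,
      intervalIntegral.integral_smul, hy0, Matrix.one_mul, inv_one] at h
    calc y s 1 = y s 1 * (y 0 1)⁻¹ * y 0 1 := by
          rw [Matrix.mul_assoc, Matrix.nonsing_inv_mul _ (hdet 1 ⟨zero_le_one, le_rfl⟩).isUnit,
            Matrix.mul_one]
    _ = (s • G s + 1) * y 0 1 := by rw [eq_sub_iff_add_eq.1 h]
    _ = y 0 1 + (s - 0) • (G s * y 0 1) := by
          rw [Matrix.add_mul, Matrix.one_mul, Matrix.smul_mul, sub_zero, add_comm]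
  exact hasDerivAt_of_eq_add_sub_smul (f := fun s => y s 1) (g := fun s => G s * y 0 1) hkey
    (hG.mul continuousAt_const)
end
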